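/- arXiv:2404.03464 — 3 statements merged into one kernel-verified Lean document; each statement's English description precedes it below -/
import Mathlib

section
/- If (a_n) is a realizable sequence and h is a polynomial with non-negative integer coefficients, then the sequence (a_n^{h(n)})_{n≥1} is realizable. -/
/-- A sequence `a : ℕ → ℕ` (indexed from 1) is realizable if there is a set `X`
and a map `T : X → X` such that for every `n ≥ 1` the set of points fixed by the
`n`-th iterate of `T` is finite with cardinality `a n`. -/

def IsRealizable (a : ℕ → ℕ) : Prop :=
  ∃ (X : Type) (T : X → X), ∀ n : ℕ, 1 ≤ n →
    {x : X | T^[n] x = x}.Finite ∧ {x : X | T^[n] x = x}.ncard = a n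

/-- The Möbius-transformed sum `∑_{d ∣ n} μ(n/d) a_d`. -/
def doldSum (a : ℕ → ℕ) (n : ℕ) : ℤ :=
  ∑ d ∈ n.divisors, (ArithmeticFunction.moebius (n / d) : ℤ) * (a d : ℤ)

/-! The sequence `b n = a n ^ h n` is realizable as soon as its Dold sums `∑_{d ∣ n} μ(n/d) b_d` are
nonnegative multiples of `n`: then `b` counts the periodic points of a disjoint union of cycles.
A constant exponent is handled directly by products. Otherwise `h` is strictly increasing and
preserves congruences.

Divisibility: for a map realizing `a`, the set `Fix(T^m) \ Fix(T^(m/p))` is a union of orbits whose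
lengths are divisible by `p ^ k` whenever `p ^ k ∣ m`, giving the Gauss congruences
`a (m/p) ≡ a m [MOD p ^ k]`. They pass to `b` by Euler's theorem, since `h (m/p) ≡ h m` modulo
`φ (p ^ k)` and both exponents are at least `k`, and the Gauss congruences of `b` give `n ∣` its
Dold sum.

Nonnegativity: if `a n ≥ 2`, the exponents `h d` of the proper divisors `d` of `n` are distinct and
smaller than `h n`, so a geometric sum bounds their terms by `b n`. If `a n = 0` all `b d` vanish,
and if `a n = 1` the realizing map has a fixed point, so `b d = 1` for all `d ∣ n`. -/

open Function Finset ArithmeticFunction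

abbrev CycleModel (c : ℕ → ℕ) : Type := Σ n : ℕ, Fin (c n) × Fin n

namespace CycleModel

def rotate (c : ℕ → ℕ) (x : CycleModel c) : CycleModel c :=
  ⟨x.1, x.2.1, ⟨(x.2.2 + 1) % x.1, Nat.mod_lt _ x.2.2.pos⟩⟩

lemma rotate_iterate (c : ℕ → ℕ) (m : ℕ) (x : CycleModel c) :
    (rotate c)^[m] x = ⟨x.1, x.2.1, ⟨(x.2.2 + m) % x.1, Nat.mod_lt _ x.2.2.pos⟩⟩ := by
  induction m with
  | zero => simp [Nat.mod_eq_of_lt x.2.2.isLt]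
  | succ m ih =>
    rw [iterate_succ_apply', ih]
    simp only [rotate, Nat.mod_add_mod, Nat.add_assoc]

lemma rotate_iterate_eq_self_iff (c : ℕ → ℕ) (m : ℕ) (x : CycleModel c) :
    (rotate c)^[m] x = x ↔ x.1 ∣ m := by
  obtain ⟨n, i, j⟩ := x
  rw [rotate_iterate, ← Nat.add_modEq_left_iff (a := j), Nat.ModEq, Nat.mod_eq_of_lt j.isLt]
  simp [Fin.ext_iff]

end CycleModel

theorem isRealizable_of_eq_sum_divisors_mul {b c : ℕ → ℕ}
    (hbc : ∀ n, 0 < n → b n = ∑ d ∈ n.divisors, d * c d) : IsRealizable b := by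
  refine ⟨CycleModel c, CycleModel.rotate c, fun m hm => ?_⟩
  have hfix : {x | (CycleModel.rotate c)^[m] x = x} =
      ↑(m.divisors.sigma fun n => (univ : Finset (Fin (c n) × Fin n))) := by
    ext x
    simp [CycleModel.rotate_iterate_eq_self_iff, Nat.mem_divisors, Nat.pos_iff_ne_zero.mp hm]
  rw [hfix, Set.ncard_coe_finset, card_sigma, hbc m hm]
  exact ⟨finite_toSet _, sum_congr rfl fun d _ => by simp [mul_comm]⟩

theorem isRealizable_of_doldSum {b : ℕ → ℕ} (hdvd : ∀ n : ℕ, 0 < n → (n : ℤ) ∣ doldSum b n)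
    (hnonneg : ∀ n, 0 < n → 0 ≤ doldSum b n) : IsRealizable b := by
  have hinv : ∀ n, 0 < n → ∑ d ∈ n.divisors, doldSum b d = b n := by
    refine sum_eq_iff_sum_mul_moebius_eq.mpr fun n _ => ?_
    simp only [Int.cast_id]
    exact Nat.sum_divisorsAntidiagonal' fun x y => moebius x * (b y : ℤ)
  refine isRealizable_of_eq_sum_divisors_mul (c := fun d => (doldSum b d / d).toNat) fun n hn => ?_
  rw [← Nat.cast_inj (R := ℤ), ← hinv n hn]
  push_cast
  refine sum_congr rfl fun d hd => ?_
  have hd := Nat.pos_of_mem_divisors hd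
  rw [Int.toNat_of_nonneg (Int.ediv_nonneg (hnonneg d hd) d.cast_nonneg),
    Int.mul_ediv_cancel' (hdvd d hd)]

theorem isRealizable_one : IsRealizable fun _ => 1 :=
  ⟨Unit, id, fun _ _ => ⟨Set.toFinite _, by simp⟩⟩

theorem IsRealizable.mul {a b : ℕ → ℕ} (ha : IsRealizable a) (hb : IsRealizable b) :
    IsRealizable fun n => a n * b n := by
  obtain ⟨X, T, hT⟩ := ha
  obtain ⟨Y, S, hS⟩ := hb
  refine ⟨X × Y, Prod.map T S, fun n hn => ?_⟩
  have hfix : {z | (Prod.map T S)^[n] z = z} = {x | T^[n] x = x} ×ˢ {y | S^[n] y = y} := by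
    ext ⟨x, y⟩
    simp [Prod.map_iterate]
  rw [hfix, Set.ncard_prod, (hT n hn).2, (hS n hn).2]
  exact ⟨(hT n hn).1.prod (hS n hn).1, rfl⟩

theorem IsRealizable.pow_const {a : ℕ → ℕ} (ha : IsRealizable a) (c : ℕ) :
    IsRealizable fun n => a n ^ c := by
  induction c with
  | zero => simpa using isRealizable_one
  | succ c ih => simpa [pow_succ] using ih.mul ha

namespace Function

theorem dvd_ncard_of_dvd_minimalPeriod {α : Type*} {f : α → α} {s : Set α} {N : ℕ}
    (hs : s.Finite) (hf : Set.MapsTo f s s) (hper : s ⊆ periodicPts f)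
    (hN : ∀ x ∈ s, N ∣ minimalPeriod f x) : N ∣ s.ncard := by
  induction hcard : s.ncard using Nat.strong_induction_on generalizing s with
  | _ n ih =>
  obtain rfl | ⟨x, hx⟩ := s.eq_empty_or_nonempty
  · simp [← hcard]
  set P := minimalPeriod f x
  set O := (f^[·] x) '' Set.Iio P
  have hOs : O ⊆ s := Set.image_subset_iff.mpr fun j _ => hf.iterate j hx
  have hO : O.ncard = P := by
    rw [iterate_injOn_Iio_minimalPeriod.ncard_image, Set.ncard_Iio_nat]
  -- `f` is injective on periodic points and maps the orbit `O` onto itself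
  have hback : ∀ y ∈ s, f y ∈ O → y ∈ O := by
    rintro y hy ⟨j, -, hj⟩
    have hP : 0 < P := minimalPeriod_pos_of_mem_periodicPts (hper hx)
    have hz : f^[(j + P - 1) % P] x ∈ O := ⟨_, Set.mem_Iio.mpr (Nat.mod_lt _ hP), rfl⟩
    have hfz : f (f^[(j + P - 1) % P] x) = f y := by
      rw [iterate_mod_minimalPeriod_eq, ← iterate_succ_apply' f, Nat.succ_eq_add_one,
        Nat.sub_add_cancel (by omega), iterate_add_minimalPeriod_eq]
      exact hj
    rwa [(bijOn_periodicPts (f := f)).injOn (hper hy) (hper (hOs hz)) hfz.symm]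
  have hrest : N ∣ (s \ O).ncard :=
    ih _ (by rw [← hcard, ← Set.ncard_sdiff_add_ncard_of_subset hOs hs, hO]
             have := minimalPeriod_pos_of_mem_periodicPts (hper hx); omega)
      hs.sdiff (fun y hy => ⟨hf hy.1, fun h => hy.2 (hback y hy.1 h)⟩)
      (Set.sdiff_subset.trans hper) (fun y hy => hN y hy.1) rfl
  rw [← hcard, ← Set.ncard_sdiff_add_ncard_of_subset hOs hs, hO]
  exact dvd_add hrest (hN x hx)

end Function

def GaussCongruences (b : ℕ → ℕ) : Prop :=
  ∀ p k m : ℕ, p.Prime → p ^ k ∣ m → b (m / p) ≡ b m [MOD p ^ k]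

theorem Nat.Prime.pow_dvd_of_dvd_of_not_dvd_div {p k m d : ℕ} (hp : p.Prime) (hpk : p ^ k ∣ m)
    (hdm : d ∣ m) (hd : ¬d ∣ m / p) : p ^ k ∣ d := by
  obtain ⟨e, rfl⟩ := hdm
  have hpe : ¬p ∣ e := by
    rintro ⟨f, rfl⟩
    exact hd ⟨f, by rw [mul_left_comm, Nat.mul_div_cancel_left _ hp.pos]⟩
  exact (Nat.Coprime.pow_left k (hp.coprime_iff_not_dvd.mpr hpe)).dvd_of_dvd_mul_right hpk

namespace IsRealizable

variable {a : ℕ → ℕ}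

theorem le_of_dvd (ha : IsRealizable a) {d n : ℕ} (hn : 0 < n) (hdn : d ∣ n) : a d ≤ a n := by
  obtain ⟨X, T, hT⟩ := ha
  rw [← (hT d (Nat.pos_of_dvd_of_pos hdn hn)).2, ← (hT n hn).2]
  exact Set.ncard_le_ncard (fun x hx => IsPeriodicPt.trans_dvd hx hdn) (hT n hn).1

theorem eq_one_of_dvd (ha : IsRealizable a) {d n : ℕ} (hn : 0 < n) (hdn : d ∣ n)
    (h1 : a n = 1) : a d = 1 := by
  obtain ⟨X, T, hT⟩ := id ha
  obtain ⟨x, hx⟩ := Set.ncard_eq_one.mp ((hT n hn).2.trans h1)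
  -- the unique point of period `n` is mapped to a point of period `n`, so it is fixed
  have hfix : IsFixedPt T x := by
    have hxn : x ∈ {x | T^[n] x = x} := hx ▸ Set.mem_singleton x
    have hTx : T x ∈ {x | T^[n] x = x} := IsPeriodicPt.apply hxn
    rwa [hx] at hTx
  have hd : 0 < d := Nat.pos_of_dvd_of_pos hdn hn
  refine le_antisymm (h1 ▸ ha.le_of_dvd hn hdn) ?_
  rw [← (hT d hd).2]
  exact (Set.ncard_pos (hT d hd).1).mpr ⟨x, hfix.iterate d⟩

theorem gaussCongruences (ha : IsRealizable a) : GaussCongruences a := by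
  intro p k m hp hpk
  obtain rfl | hk := k.eq_zero_or_pos
  · exact Nat.modEq_one
  obtain rfl | hm := m.eq_zero_or_pos
  · rw [Nat.zero_div]
  have hpm : p ∣ m := (dvd_pow_self p hk.ne').trans hpk
  have hmp : 0 < m / p := Nat.div_pos (Nat.le_of_dvd hm hpm) hp.pos
  obtain ⟨X, T, hT⟩ := id ha
  have hsub : {x | T^[m / p] x = x} ⊆ {x | T^[m] x = x} :=
    fun x hx => IsPeriodicPt.trans_dvd hx (Nat.div_dvd_of_dvd hpm)
  refine (Nat.modEq_iff_dvd' (ha.le_of_dvd hm (Nat.div_dvd_of_dvd hpm))).mpr ?_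
  rw [← (hT m hm).2, ← (hT (m / p) hmp).2, ← Set.ncard_sdiff hsub ((hT m hm).1.subset hsub)]
  refine dvd_ncard_of_dvd_minimalPeriod (f := T) (hT m hm).1.sdiff ?_ ?_ ?_
  · rintro x ⟨hxm, hxmp⟩
    refine ⟨IsPeriodicPt.apply hxm, fun h => hxmp ?_⟩
    have hdvd : minimalPeriod T (T x) ∣ m / p := IsPeriodicPt.minimalPeriod_dvd h
    rw [minimalPeriod_apply (mk_mem_periodicPts hm hxm)] at hdvd
    exact isPeriodicPt_iff_minimalPeriod_dvd.mpr hdvd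
  · exact fun x hx => mk_mem_periodicPts hm hx.1
  · exact fun x hx => hp.pow_dvd_of_dvd_of_not_dvd_div hpk (IsPeriodicPt.minimalPeriod_dvd hx.1)
      fun h => hx.2 (isPeriodicPt_iff_minimalPeriod_dvd.mpr h)

end IsRealizable

theorem Nat.pow_modEq_pow_of_modEq_totient {x n H H' : ℕ} (hx : x.Coprime n)
    (hH : H ≡ H' [MOD n.totient]) : x ^ H ≡ x ^ H' [MOD n] := by
  wlog hle : H' ≤ H generalizing H H'
  · exact (this hH.symm (le_of_not_ge hle)).symm
  obtain ⟨t, ht⟩ := (Nat.modEq_iff_dvd' hle).mp hH.symm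
  calc x ^ H = x ^ H' * (x ^ n.totient) ^ t := by
        rw [← pow_mul, ← ht, ← pow_add, Nat.add_sub_cancel' hle]
    _ ≡ x ^ H' * 1 ^ t [MOD n] := ((Nat.ModEq.pow_totient hx).pow t).mul_left _
    _ = x ^ H' := by rw [one_pow, mul_one]

theorem Nat.ModEq.pow_of_modEq_totient {p k x y H H' : ℕ} (hp : p.Prime)
    (hxy : x ≡ y [MOD p ^ k]) (hH : k ≤ H) (hH' : k ≤ H') (hHH' : H ≡ H' [MOD (p ^ k).totient]) :
    x ^ H ≡ y ^ H' [MOD p ^ k] := by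
  obtain rfl | hk := k.eq_zero_or_pos
  · exact Nat.modEq_one
  by_cases hpx : p ∣ x
  · have hpy : p ∣ y := ((hxy.of_dvd (dvd_pow_self p hk.ne')).dvd_iff dvd_rfl).mp hpx
    have hxH : p ^ k ∣ x ^ H := (pow_dvd_pow_of_dvd hpx k).trans (pow_dvd_pow x hH)
    have hyH' : p ^ k ∣ y ^ H' := (pow_dvd_pow_of_dvd hpy k).trans (pow_dvd_pow y hH')
    exact (Nat.modEq_zero_iff_dvd.mpr hxH).trans (Nat.modEq_zero_iff_dvd.mpr hyH').symm
  · have hx : x.Coprime (p ^ k) := Nat.Coprime.pow_right k ((hp.coprime_iff_not_dvd.mpr hpx).symm)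
    exact (Nat.pow_modEq_pow_of_modEq_totient hx hHH').trans (hxy.pow H')

theorem GaussCongruences.pow {a e : ℕ → ℕ} (ha : GaussCongruences a) (he : ∀ n, n ≤ e n)
    (hcong : ∀ {k m n}, m ≡ n [MOD k] → e m ≡ e n [MOD k]) :
    GaussCongruences fun n => a n ^ e n := by
  intro p k m hp hpk
  obtain rfl | hk := k.eq_zero_or_pos
  · exact Nat.modEq_one
  obtain rfl | hm := m.eq_zero_or_pos
  · rw [Nat.zero_div]
  have hpm : p ∣ m := (dvd_pow_self p hk.ne').trans hpk
  have hmp : 0 < m / p := Nat.div_pos (Nat.le_of_dvd hm hpm) hp.pos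
  have hpk' : p ^ (k - 1) ∣ m / p := by
    rwa [Nat.dvd_div_iff_mul_dvd hpm, ← pow_succ', Nat.sub_add_cancel hk]
  have hk_le : k ≤ m / p := calc
    k ≤ p ^ (k - 1) := by have := Nat.lt_pow_self (n := k - 1) hp.one_lt; omega
    _ ≤ m / p := Nat.le_of_dvd hmp hpk'
  -- `m ≡ m / p` modulo `m - m / p = (m / p) * (p - 1)`, a multiple of `φ (p ^ k)`
  have hmod : m / p ≡ m [MOD (p ^ k).totient] := by
    refine (Nat.modEq_iff_dvd' (Nat.div_le_self m p)).mpr ?_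
    rw [Nat.totient_prime_pow hp hk, ← Nat.div_mul_cancel hpm, Nat.mul_div_cancel _ hp.pos,
      ← Nat.mul_sub_one]
    exact Nat.mul_dvd_mul hpk' dvd_rfl
  exact (ha p k m hp hpk).pow_of_modEq_totient hp (hk_le.trans (he _))
    ((hk_le.trans (Nat.div_le_self m p)).trans (he m)) (hcong hmod)

theorem doldSum_eq_sum_moebius_mul (b : ℕ → ℕ) (n : ℕ) :
    doldSum b n = ∑ d ∈ n.divisors, moebius d * (b (n / d) : ℤ) := by
  rw [doldSum, ← Nat.sum_divisorsAntidiagonal' fun x y => moebius x * (b y : ℤ),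
    Nat.sum_divisorsAntidiagonal fun x y => moebius x * (b y : ℤ)]

theorem doldSum_prime_pow_mul (b : ℕ → ℕ) {p j q : ℕ} (hp : p.Prime) (hj : j ≠ 0)
    (hq : ¬p ∣ q) :
    doldSum b (p ^ j * q) =
      ∑ e ∈ q.divisors, moebius e * ((b (p ^ j * q / e) : ℤ) - b (p ^ j * q / e / p)) := by
  have hpq : p.Coprime q := hp.coprime_iff_not_dvd.mpr hq
  rw [doldSum_eq_sum_moebius_mul, Nat.divisors_mul, mul_def,
    sum_image (hpq.pow_left j).mul_injOn_divisors, sum_product_right]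
  refine sum_congr rfl fun e he => ?_
  have hmul : ∀ i, moebius (p ^ i * e) = moebius (p ^ i) * moebius e := fun i =>
    isMultiplicative_moebius.map_mul_of_coprime
      ((hpq.coprime_dvd_right (Nat.dvd_of_mem_divisors he)).pow_left i)
  obtain ⟨j, rfl⟩ := Nat.exists_eq_add_one_of_ne_zero hj
  -- only the squarefree divisors `e` and `p * e` contribute
  rw [Nat.sum_divisors_prime_pow hp, sum_range_succ', sum_range_succ', sum_eq_zero fun i _ => by
    rw [hmul, moebius_apply_prime_pow hp (by omega), if_neg (by omega), zero_mul, zero_mul]]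
  simp only [zero_add, hmul]
  simp only [pow_zero, pow_one, one_mul, moebius_apply_one, moebius_apply_prime hp,
    Nat.div_div_eq_div_mul, mul_comm e p]
  ring

theorem GaussCongruences.dvd_doldSum {b : ℕ → ℕ} (hb : GaussCongruences b) (n : ℕ) :
    (n : ℤ) ∣ doldSum b n := by
  obtain rfl | hn := n.eq_zero_or_pos
  · simp [doldSum]
  rw [Int.natCast_dvd, Nat.dvd_iff_prime_pow_dvd_dvd]
  intro p k hp hpk
  obtain rfl | hk := k.eq_zero_or_pos
  · simp
  obtain ⟨j, q, hq, rfl⟩ := Nat.exists_eq_pow_mul_and_not_dvd hn.ne' p hp.ne_one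
  have hkj : p ^ k ∣ p ^ j :=
    (Nat.Coprime.pow_left k (hp.coprime_iff_not_dvd.mpr hq)).dvd_of_dvd_mul_right hpk
  have hj : j ≠ 0 := by
    have := (Nat.pow_dvd_pow_iff_le_right hp.one_lt).mp hkj
    omega
  rw [← Int.natCast_dvd, doldSum_prime_pow_mul b hp hj hq]
  refine dvd_sum fun e he => Dvd.dvd.mul_left ?_ _
  have hpke : p ^ k ∣ p ^ j * q / e := by
    rw [Nat.mul_div_assoc _ (Nat.dvd_of_mem_divisors he)]
    exact hkj.mul_right _
  exact_mod_cast Nat.modEq_iff_dvd.mp (hb p k _ hp hpke)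

theorem doldSum_nonneg_of_sum_properDivisors_le {b : ℕ → ℕ} {n : ℕ} (hn : n ≠ 0)
    (hb : ∑ d ∈ n.properDivisors, b d ≤ b n) : 0 ≤ doldSum b n := by
  rw [doldSum, ← Nat.cons_self_properDivisors hn, sum_cons, Nat.div_self (Nat.pos_of_ne_zero hn),
    moebius_apply_one, one_mul]
  have hterm : ∀ d ∈ n.properDivisors, -(b d : ℤ) ≤ moebius (n / d) * b d := fun d _ => by
    have := (abs_le.mp (abs_moebius_le_one (n := n / d))).1
    nlinarith [(b d).cast_nonneg (α := ℤ)]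
  have := sum_le_sum hterm
  rw [sum_neg_distrib] at this
  have hb' : ∑ d ∈ n.properDivisors, (b d : ℤ) ≤ b n := by exact_mod_cast hb
  linarith

theorem doldSum_eq_of_forall_eq_one {b : ℕ → ℕ} {n : ℕ} (hb : ∀ d ∈ n.divisors, b d = 1) :
    doldSum b n = if n = 1 then 1 else 0 := by
  rw [doldSum, sum_congr rfl fun d hd => by rw [hb d hd, Nat.cast_one, mul_one],
    Nat.sum_div_divisors n fun d => moebius d, ← coe_mul_zeta_apply, moebius_mul_coe_zeta,
    one_apply]

theorem Nat.sum_properDivisors_pow_lt {A : ℕ} {e : ℕ → ℕ} (hA : 2 ≤ A) (he : StrictMono e)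
    (n : ℕ) : ∑ d ∈ n.properDivisors, A ^ e d < A ^ e n := by
  rw [← sum_image he.injective.injOn]
  refine Nat.geomSum_lt hA fun k hk => ?_
  obtain ⟨d, hd, rfl⟩ := mem_image.mp hk
  exact he (Nat.mem_properDivisors.mp hd).2

theorem IsRealizable.doldSum_pow_nonneg {a e : ℕ → ℕ} (ha : IsRealizable a) (he : StrictMono e)
    {n : ℕ} (hn : 0 < n) : 0 ≤ doldSum (fun n => a n ^ e n) n := by
  have hle : ∀ d ∈ n.divisors, a d ≤ a n := fun d hd =>
    ha.le_of_dvd hn (Nat.dvd_of_mem_divisors hd)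
  have he0 : ∀ d ∈ n.divisors, e d ≠ 0 := fun d hd =>
    ((Nat.pos_of_mem_divisors hd).trans_le (he.id_le d)).ne'
  obtain h0 | h1 | h2 : a n = 0 ∨ a n = 1 ∨ 2 ≤ a n := by omega
  · refine doldSum_nonneg_of_sum_properDivisors_le hn.ne' (le_of_eq_of_le ?_ (Nat.zero_le _))
    refine sum_eq_zero fun d hd => ?_
    have hd := Nat.properDivisors_subset_divisors hd
    have had : a d = 0 := by have := hle d hd; omega
    rw [had, zero_pow (he0 d hd)]
  · rw [doldSum_eq_of_forall_eq_one fun d hd => by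
      rw [ha.eq_one_of_dvd hn (Nat.dvd_of_mem_divisors hd) h1, one_pow]]
    split_ifs <;> norm_num
  · refine doldSum_nonneg_of_sum_properDivisors_le hn.ne' ?_
    calc ∑ d ∈ n.properDivisors, a d ^ e d
        ≤ ∑ d ∈ n.properDivisors, a n ^ e d := sum_le_sum fun d hd =>
          Nat.pow_le_pow_left (hle d (Nat.properDivisors_subset_divisors hd)) _
      _ ≤ a n ^ e n := (Nat.sum_properDivisors_pow_lt h2 he n).le

theorem IsRealizable.pow_of_strictMono {a e : ℕ → ℕ} (ha : IsRealizable a) (he : StrictMono e)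
    (hcong : ∀ {k m n}, m ≡ n [MOD k] → e m ≡ e n [MOD k]) :
    IsRealizable fun n => a n ^ e n :=
  isRealizable_of_doldSum (fun n _ => (ha.gaussCongruences.pow he.id_le hcong).dvd_doldSum n)
    fun _ hn => ha.doldSum_pow_nonneg he hn

namespace Polynomial

theorem eval_nat_modEq (h : ℕ[X]) {k m n : ℕ} (hmn : m ≡ n [MOD k]) :
    h.eval m ≡ h.eval n [MOD k] := by
  rw [← ZMod.natCast_eq_natCast_iff] at hmn ⊢
  have hcast (x : ℕ) :
      ((h.eval x : ℕ) : ZMod k) = (h.map (Nat.castRingHom _)).eval (x : ZMod k) := by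
    simp
  rw [hcast, hcast, hmn]

theorem strictMono_eval_nat (h : ℕ[X]) (hh : 0 < h.natDegree) :
    StrictMono fun n : ℕ => h.eval n := by
  intro m n hmn
  simp only [eval_eq_sum_range]
  refine sum_lt_sum (fun i _ => Nat.mul_le_mul_left _ (Nat.pow_le_pow_left hmn.le i))
    ⟨h.natDegree, self_mem_range_succ _, ?_⟩
  exact Nat.mul_lt_mul_of_pos_left (Nat.pow_lt_pow_left hmn hh.ne')
    (Nat.pos_of_ne_zero (leadingCoeff_ne_zero.mpr (ne_zero_of_natDegree_gt hh)))

end Polynomial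

theorem realizable_polynomial_powers (a : ℕ → ℕ) (ha : IsRealizable a)
    (h : Polynomial ℕ) :
    IsRealizable (fun n => a n ^ h.eval n) := by
  obtain hh | hh := h.natDegree.eq_zero_or_pos
  · rw [Polynomial.eq_C_of_natDegree_eq_zero hh]
    simpa using ha.pow_const (h.coeff 0)
  · exact ha.pow_of_strictMono (h.strictMono_eval_nat hh) h.eval_nat_modEq
end

section
/- The sequence (5 F_{n^2})_{n≥1}, where F is the Fibonacci sequence (F_1 = F_2 = 1), is realizable: for all n ≥ 1, n divides ∑_{d|n} μ(n/d)·5·F_{d^2} and ∑_{d|n} μ(n/d)·5·F_{d^2} ≥ 0. -/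
theorem pow_succ_eq_fib_mul_add {R : Type*} [Ring R] {x : R} (hx : x ^ 2 = x + 1) (n : ℕ) :
    x ^ (n + 1) = (Nat.fib (n + 1) : R) * x + Nat.fib n := by
  induction n with
  | zero => simp
  | succ n ih =>
    rw [pow_succ, ih, add_mul, mul_assoc, ← sq, hx, Nat.fib_add_two, Nat.cast_add]
    noncomm_ring

theorem natCast_dvd_pow_sub_one {R : Type*} [Ring R] {c : ℕ} {a : R} (h : (c : R) ∣ a - 1)
    (t : ℕ) : (c : R) ∣ a ^ t - 1 :=
  h.trans ⟨_, (mul_geom_sum a t).symm⟩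

theorem natCast_pow_succ_dvd_pow_pow_sub_one {R : Type*} [Ring R] {p : ℕ} {a : R}
    (h : (p : R) ∣ a - 1) (k : ℕ) : (p : R) ^ (k + 1) ∣ a ^ p ^ k - 1 := by
  obtain ⟨C, hC⟩ := h
  -- `ℤ[X]` is commutative, so the congruence `(1 + p X) ^ p ^ k ≡ 1 mod p ^ (k + 1)` holds there;
  -- evaluating at `C` transports it to `R`.
  have hpoly : (p : Polynomial ℤ) ^ (k + 1) ∣
      (1 + (p : Polynomial ℤ) * Polynomial.X) ^ p ^ k - 1 ^ p ^ k :=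
    dvd_sub_pow_of_dvd_sub (by simp) k
  simpa [← hC] using map_dvd (Polynomial.aeval C) hpoly

def fibMatrix : Matrix (Fin 2) (Fin 2) ℤ := !![1, 1; 1, 0]

theorem fibMatrix_sq : fibMatrix ^ 2 = fibMatrix + 1 := by
  ext i j; fin_cases i <;> fin_cases j <;> simp [fibMatrix, sq, Matrix.one_fin_two]

theorem fibMatrix_pow_apply_zero_one (n : ℕ) : (fibMatrix ^ n) 0 1 = Nat.fib n := by
  cases n with
  | zero => simp
  | succ n =>
    rw [pow_succ_eq_fib_mul_add fibMatrix_sq, ← nsmul_eq_mul]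
    simp [fibMatrix, Matrix.natCast_apply]

theorem Matrix.natCast_dvd_apply {n α : Type*} [Fintype n] [DecidableEq n] [CommSemiring α]
    {c : ℕ} {A : Matrix n n α} (h : (c : Matrix n n α) ∣ A) (i j : n) :
    (c : α) ∣ A i j := by
  obtain ⟨B, rfl⟩ := h
  rw [← nsmul_eq_mul, Matrix.smul_apply, nsmul_eq_mul]
  exact dvd_mul_right _ _

theorem natCast_dvd_fibMatrix_pow_sub_one {c n : ℕ} (h₀ : c ∣ Nat.fib (n + 1))
    (h₁ : Nat.fib n ≡ 1 [MOD c]) :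
    (c : Matrix (Fin 2) (Fin 2) ℤ) ∣ fibMatrix ^ (n + 1) - 1 := by
  obtain ⟨u, hu⟩ := Int.natCast_dvd_natCast.2 h₀
  obtain ⟨v, hv⟩ := Nat.modEq_iff_dvd.1 h₁.symm
  rw [Nat.cast_one] at hv
  refine ⟨u • fibMatrix + v • 1, ?_⟩
  rw [pow_succ_eq_fib_mul_add fibMatrix_sq, ← nsmul_eq_mul, ← nsmul_eq_mul]
  ext i j
  fin_cases i <;> fin_cases j <;> simp [fibMatrix, Matrix.natCast_apply, Matrix.intCast_apply] <;>
    linarith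

theorem dvd_fib_add_sub_fib {c e : ℕ} (h : (c : Matrix (Fin 2) (Fin 2) ℤ) ∣ fibMatrix ^ e - 1)
    {t : ℕ} (ht : e ∣ t) (n : ℕ) : (c : ℤ) ∣ Nat.fib (n + t) - Nat.fib n := by
  obtain ⟨s, rfl⟩ := ht
  obtain ⟨D, hD⟩ := natCast_dvd_pow_sub_one h s
  have : fibMatrix ^ (n + e * s) - fibMatrix ^ n = c * (fibMatrix ^ n * D) := by
    rw [pow_add, pow_mul, ← mul_sub_one, hD, ← mul_assoc, ← Nat.cast_comm, mul_assoc]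
  simpa [fibMatrix_pow_apply_zero_one, this] using
    Matrix.natCast_dvd_apply (Dvd.intro _ this.symm) 0 1

theorem fib_eq_zero_and_eq_one_of_pow_eq_one {K : Type*} [Field K] {α β : K}
    (hα : α ^ 2 = α + 1) (hβ : β ^ 2 = β + 1) (hαβ : α ≠ β) {n : ℕ}
    (hαn : α ^ (n + 1) = 1) (hβn : β ^ (n + 1) = 1) :
    (Nat.fib (n + 1) : K) = 0 ∧ (Nat.fib n : K) = 1 := by
  rw [pow_succ_eq_fib_mul_add hα] at hαn
  rw [pow_succ_eq_fib_mul_add hβ] at hβn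
  have h₀ : (Nat.fib (n + 1) : K) * (α - β) = 0 := by linear_combination hαn - hβn
  have h₀' := (mul_eq_zero.1 h₀).resolve_right (sub_ne_zero.2 hαβ)
  exact ⟨h₀', by simpa [h₀'] using hαn⟩

theorem exists_sq_eq_add_one {K : Type*} [Field K] (h2 : (2 : K) ≠ 0) (h5 : (5 : K) ≠ 0)
    (hsq : IsSquare (5 : K)) :
    ∃ α β : K, α ^ 2 = α + 1 ∧ β ^ 2 = β + 1 ∧ α ≠ β := by
  obtain ⟨s, hs⟩ := hsq
  have hs0 : s ≠ 0 := by rintro rfl; exact h5 (by simpa using hs)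
  refine ⟨(1 + s) / 2, (1 - s) / 2, ?_, ?_, fun h => hs0 ?_⟩
  · field_simp; linear_combination -hs
  · field_simp; linear_combination -hs
  · field_simp at h
    exact (mul_eq_zero.1 (by linear_combination h : (2 : K) * s = 0)).resolve_left h2

theorem isSquare_natCast_galoisField (p : ℕ) [Fact p.Prime] (n : ℕ) :
    IsSquare (n : GaloisField p 2) := by
  let K := GaloisField p 2
  let _ := Fintype.ofFinite K
  by_cases hchar : ringChar K = 2
  · exact FiniteField.isSquare_of_char_two hchar _
  by_cases hn : (n : K) = 0
  · exact hn ▸ IsSquare.zero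
  have hcard : Fintype.card K = p ^ 2 := by
    rw [← Nat.card_eq_fintype_card]; exact GaloisField.card p 2 two_ne_zero
  -- Euler's criterion, with `n ^ (p - 1) = 1` already in the prime field.
  have hnp : (n : K) ^ (p - 1) = 1 := by
    have hn' : (n : ZMod p) ≠ 0 := fun h => hn <| by
      simpa only [map_natCast, map_zero] using congrArg (algebraMap (ZMod p) K) h
    simpa only [map_pow, map_natCast, map_one] using
      congrArg (algebraMap (ZMod p) K) (ZMod.pow_card_sub_one_eq_one hn')
  obtain ⟨t, rfl⟩ : Odd p := (Fact.out : p.Prime).odd_of_ne_two (ringChar.eq K p ▸ hchar)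
  have hexp : (2 * t + 1) ^ 2 / 2 = (2 * t + 1 - 1) * (t + 1) := by
    rw [show (2 * t + 1) ^ 2 = 2 * ((2 * t + 1 - 1) * (t + 1)) + 1 by simp; ring]
    omega
  rw [FiniteField.isSquare_iff hchar hn, hcard, hexp, pow_mul, hnp, one_pow]

theorem prime_dvd_fibMatrix_pow_sq_sub_one_of_odd {p : ℕ} [Fact p.Prime] (hodd : Odd p)
    (hp5 : p ≠ 5) : (p : Matrix (Fin 2) (Fin 2) ℤ) ∣ fibMatrix ^ (p ^ 2 - 1) - 1 := by
  let K := GaloisField p 2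
  let _ := Fintype.ofFinite K
  have hcard : Fintype.card K = p ^ 2 := by
    rw [← Nat.card_eq_fintype_card]; exact GaloisField.card p 2 two_ne_zero
  have hcast (q : ℕ) (hq : q.Prime) (hqp : q ≠ p) : (q : K) ≠ 0 := by
    rw [Ne, CharP.cast_eq_zero_iff K p, Nat.prime_dvd_prime_iff_eq Fact.out hq]
    exact hqp.symm
  have h2 : (2 : K) ≠ 0 := by
    exact_mod_cast hcast 2 Nat.prime_two (by rintro rfl; exact Nat.not_even_iff_odd.2 hodd even_two)
  have h5 : (5 : K) ≠ 0 := by exact_mod_cast hcast 5 Nat.prime_five (Ne.symm hp5)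
  obtain ⟨α, β, hα, hβ, hαβ⟩ := exists_sq_eq_add_one h2 h5 (by
    exact_mod_cast isSquare_natCast_galoisField p 5)
  have hexp : p ^ 2 - 2 + 1 = p ^ 2 - 1 := by
    have : 4 ≤ p ^ 2 := by nlinarith [(Fact.out : p.Prime).two_le]
    omega
  have hpow (x : K) (hx : x ^ 2 = x + 1) : x ^ (p ^ 2 - 2 + 1) = 1 := by
    have hx0 : x ≠ 0 := by rintro rfl; norm_num at hx
    rw [hexp, ← hcard]
    exact FiniteField.pow_card_sub_one_eq_one x hx0
  obtain ⟨h₀, h₁⟩ :=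
    fib_eq_zero_and_eq_one_of_pow_eq_one hα hβ hαβ (hpow α hα) (hpow β hβ)
  rw [CharP.cast_eq_zero_iff K p] at h₀
  rw [← Nat.cast_one, CharP.natCast_eq_natCast K p] at h₁
  rw [← hexp]
  exact natCast_dvd_fibMatrix_pow_sub_one h₀ h₁

theorem five_dvd_fibMatrix_pow_twenty_sub_one :
    ((5 : ℕ) : Matrix (Fin 2) (Fin 2) ℤ) ∣ fibMatrix ^ 20 - 1 :=
  natCast_dvd_fibMatrix_pow_sub_one (n := 19) (by decide) (by decide)

theorem prime_dvd_fibMatrix_pow_sq_sub_one {p : ℕ} (hp : p.Prime) (hp5 : p ≠ 5) :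
    (p : Matrix (Fin 2) (Fin 2) ℤ) ∣ fibMatrix ^ (p ^ 2 - 1) - 1 := by
  obtain rfl | hodd := hp.eq_two_or_odd'
  · exact natCast_dvd_fibMatrix_pow_sub_one (n := 2) (by decide) (by decide)
  have := Fact.mk hp
  exact prime_dvd_fibMatrix_pow_sq_sub_one_of_odd hodd hp5

theorem pow_succ_dvd_fib_add_sub_fib {p e : ℕ}
    (h : (p : Matrix (Fin 2) (Fin 2) ℤ) ∣ fibMatrix ^ e - 1) {k t : ℕ} (ht : e * p ^ k ∣ t)
    (n : ℕ) : (p : ℤ) ^ (k + 1) ∣ Nat.fib (n + t) - Nat.fib n := by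
  have := natCast_pow_succ_dvd_pow_pow_sub_one h k
  rw [← pow_mul, ← Nat.cast_pow] at this
  exact_mod_cast dvd_fib_add_sub_fib this ht n

theorem prime_pow_dvd_five_mul_fib_sq_sub {p : ℕ} (hp : p.Prime) (k m : ℕ) :
    (p : ℤ) ^ (k + 1) ∣ ((5 * Nat.fib ((p ^ (k + 1) * m) ^ 2) : ℕ) : ℤ) -
      ((5 * Nat.fib ((p ^ k * m) ^ 2) : ℕ) : ℤ) := by
  have hsq : (p ^ (k + 1) * m) ^ 2 = (p ^ k * m) ^ 2 + (p ^ 2 - 1) * (p ^ k * m) ^ 2 := by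
    have : 1 ≤ p ^ 2 := Nat.one_le_pow _ _ hp.pos
    zify [this]
    ring
  rw [hsq]
  push_cast
  rw [← mul_sub]
  obtain rfl | hp5 := eq_or_ne p 5
  · cases k with
    | zero => simp
    | succ k =>
      rw [pow_succ']
      exact mul_dvd_mul_left 5 (pow_succ_dvd_fib_add_sub_fib five_dvd_fibMatrix_pow_twenty_sub_one
        ⟨6 * 5 ^ (k + 1) * m ^ 2, by norm_num; ring⟩ _)
  · exact dvd_mul_of_dvd_right (pow_succ_dvd_fib_add_sub_fib
      (prime_dvd_fibMatrix_pow_sq_sub_one hp hp5)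
      (mul_dvd_mul_left _ ⟨p ^ k * m ^ 2, by ring⟩) _) 5

open ArithmeticFunction
open scoped ArithmeticFunction.Moebius

theorem Nat.Coprime.sum_divisors_mul_eq {M : Type*} [AddCommMonoid M] {m n : ℕ}
    (hmn : m.Coprime n) (f : ℕ → M) :
    ∑ d ∈ (m * n).divisors, f d = ∑ i ∈ m.divisors, ∑ j ∈ n.divisors, f (i * j) := by
  rw [hmn.divisors_mul, Finset.sum_map, ← Finset.sum_product']
  exact Finset.sum_attach _ (fun x : ℕ × ℕ => f (x.1 * x.2))

theorem sum_divisors_prime_pow_moebius {p : ℕ} (hp : p.Prime) (k : ℕ) (f : ℕ → ℤ) :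
    ∑ i ∈ (p ^ (k + 1)).divisors, (μ (p ^ (k + 1) / i) : ℤ) * f i =
      f (p ^ (k + 1)) - f (p ^ k) := by
  rw [Nat.sum_divisors_prime_pow hp, Finset.sum_range_succ, Finset.sum_range_succ,
    Finset.sum_eq_zero]
  · simp [Nat.pow_div, hp.pos, moebius_apply_prime hp]
    ring
  · intro i hi
    rw [Finset.mem_range] at hi
    rw [Nat.pow_div (by omega) hp.pos, moebius_apply_prime_pow hp (by omega), if_neg (by omega)]
    simp

theorem doldSum_prime_pow_mul_s10 (a : ℕ → ℕ) {p m : ℕ} (hp : p.Prime) (hpm : ¬p ∣ m)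
    (k : ℕ) :
    doldSum a (p ^ (k + 1) * m) =
      ∑ e ∈ m.divisors, (μ (m / e) : ℤ) * ((a (p ^ (k + 1) * e) : ℤ) - a (p ^ k * e)) := by
  have hcop : (p ^ (k + 1)).Coprime m := (hp.coprime_iff_not_dvd.2 hpm).pow_left _
  rw [doldSum, hcop.sum_divisors_mul_eq, Finset.sum_comm]
  refine Finset.sum_congr rfl fun e he => ?_
  have he' := Nat.dvd_of_mem_divisors he
  rw [← sum_divisors_prime_pow_moebius hp k (fun i => (a (i * e) : ℤ)), Finset.mul_sum]
  refine Finset.sum_congr rfl fun i hi => ?_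
  have hi' := Nat.dvd_of_mem_divisors hi
  have hcop' : (p ^ (k + 1) / i).Coprime (m / e) :=
    (hcop.coprime_dvd_left (Nat.div_dvd_of_dvd hi')).coprime_dvd_right (Nat.div_dvd_of_dvd he')
  rw [← Nat.div_mul_div_comm hi' he', isMultiplicative_moebius.map_mul_of_coprime hcop']
  ring

def SatisfiesGaussCongruences (a : ℕ → ℕ) : Prop :=
  ∀ p k m : ℕ, p.Prime → ¬p ∣ m → (p : ℤ) ^ (k + 1) ∣ (a (p ^ (k + 1) * m) : ℤ) - a (p ^ k * m)

theorem prime_pow_dvd_doldSum {a : ℕ → ℕ} (h : SatisfiesGaussCongruences a)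
    {p m : ℕ} (hp : p.Prime) (hpm : ¬p ∣ m) : ∀ k, (p : ℤ) ^ k ∣ doldSum a (p ^ k * m)
  | 0 => one_dvd _
  | k + 1 => by
    rw [doldSum_prime_pow_mul_s10 a hp hpm]
    exact Finset.dvd_sum fun e he => (h p k e hp fun hpe => hpm <|
      hpe.trans (Nat.dvd_of_mem_divisors he)).mul_left _

theorem natCast_dvd_doldSum {a : ℕ → ℕ} (h : SatisfiesGaussCongruences a) (n : ℕ) :
    (n : ℤ) ∣ doldSum a n := by
  rcases eq_or_ne n 0 with rfl | hn
  · simp [doldSum]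
  rw [Int.natCast_dvd]
  refine (Nat.dvd_iff_prime_pow_dvd_dvd _ _).2 fun p k hp hpk => ?_
  have hk : k ≤ n.factorization p := (hp.pow_dvd_iff_le_factorization hn).1 hpk
  have hdvd := prime_pow_dvd_doldSum h hp (Nat.not_dvd_ordCompl hp hn) (n.factorization p)
  rw [Nat.ordProj_mul_ordCompl_eq_self, ← Int.natCast_pow, Int.natCast_dvd] at hdvd
  exact (pow_dvd_pow p hk).trans hdvd

theorem fib_mul_two_pow_le (m t : ℕ) : Nat.fib m * 2 ^ t ≤ Nat.fib (m + 2 * t) := by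
  induction t with
  | zero => simp
  | succ t ih =>
    rw [show m + 2 * (t + 1) = m + 2 * t + 2 by ring, Nat.fib_add_two, pow_succ, ← mul_assoc]
    have := Nat.fib_le_fib_succ (n := m + 2 * t)
    omega

theorem mul_fib_sq_div_two_le (n : ℕ) : n * Nat.fib ((n / 2) ^ 2) ≤ Nat.fib (n ^ 2) := by
  rcases Nat.eq_zero_or_pos n with rfl | hn
  · simp
  have hexp : (n / 2) ^ 2 + 2 * (n - 1) ≤ n ^ 2 := by
    obtain ⟨k, rfl⟩ : ∃ k, n = k + 1 := ⟨n - 1, by omega⟩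
    have hq := Nat.div_mul_le_self (k + 1) 2
    generalize (k + 1) / 2 = q at hq ⊢
    simp only [Nat.add_sub_cancel]
    nlinarith [Nat.mul_le_mul hq hq]
  calc n * Nat.fib ((n / 2) ^ 2) ≤ 2 ^ (n - 1) * Nat.fib ((n / 2) ^ 2) := by
        gcongr
        have := Nat.lt_two_pow_self (n := n - 1)
        omega
    _ ≤ Nat.fib ((n / 2) ^ 2 + 2 * (n - 1)) := by rw [mul_comm]; exact fib_mul_two_pow_le _ _
    _ ≤ Nat.fib (n ^ 2) := Nat.fib_mono hexp

theorem le_div_two_of_mem_properDivisors {d n : ℕ} (hd : d ∈ n.properDivisors) :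
    d ≤ n / 2 := by
  rw [Nat.le_div_iff_mul_le two_pos]
  calc d * 2 ≤ d * (n / d) := Nat.mul_le_mul_left d (Nat.one_lt_div_of_mem_properDivisors hd)
    _ = n := Nat.mul_div_cancel' (Nat.mem_properDivisors.1 hd).1

theorem doldSum_nonneg {a : ℕ → ℕ} (ha : Monotone a) {n : ℕ} (h : n * a (n / 2) ≤ a n) :
    0 ≤ doldSum a n := by
  rcases eq_or_ne n 0 with rfl | hn
  · simp [doldSum]
  have hterm (d : ℕ) (hd : d ∈ n.properDivisors) : -(a (n / 2) : ℤ) ≤ μ (n / d) * a d := by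
    have hμ := (abs_le.1 (abs_moebius_le_one (n := n / d))).1
    have had : (a d : ℤ) ≤ a (n / 2) := by
      exact_mod_cast ha (le_div_two_of_mem_properDivisors hd)
    nlinarith
  have hcard : (n.properDivisors.card : ℤ) * a (n / 2) ≤ n * a (n / 2) := by
    gcongr
    exact (Finset.card_le_card Nat.properDivisors_subset_divisors).trans
      (Nat.card_divisors_le_self n)
  have hsum := Finset.card_nsmul_le_sum _ _ _ hterm
  rw [doldSum, ← Nat.cons_self_properDivisors hn, Finset.sum_cons,
    Nat.div_self (Nat.pos_of_ne_zero hn), moebius_apply_one]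
  rw [nsmul_eq_mul] at hsum
  have : (n : ℤ) * a (n / 2) ≤ a n := by exact_mod_cast h
  linarith

theorem sum_divisors_doldSum (a : ℕ → ℕ) {n : ℕ} (hn : 0 < n) :
    ∑ d ∈ n.divisors, doldSum a d = a n :=
  sum_eq_iff_sum_mul_moebius_eq (f := doldSum a) (g := fun n => (a n : ℤ)) |>.2
    (fun _ _ => Nat.sum_divisorsAntidiagonal' fun x y => (μ x : ℤ) * a y) n hn

theorem coe_finRotate_iterate {d : ℕ} (n : ℕ) (j : Fin d) :
    ((finRotate d)^[n] j : ℕ) = (j + n) % d := by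
  induction n with
  | zero => simp [Nat.mod_eq_of_lt j.isLt]
  | succ n ih =>
    have := j.neZero
    rw [Function.iterate_succ_apply', finRotate_apply, Fin.val_add, ih, Fin.val_one',
      Nat.add_mod_mod, Nat.mod_add_mod, add_assoc]

theorem finRotate_iterate_apply_eq_self_iff {d : ℕ} (n : ℕ) (j : Fin d) :
    (finRotate d)^[n] j = j ↔ d ∣ n := by
  rw [Fin.ext_iff, coe_finRotate_iterate, ← Nat.modEq_zero_iff_dvd]
  conv_lhs => rhs; rw [← Nat.mod_eq_of_lt j.isLt, ← add_zero (j : ℕ)]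
  exact ⟨Nat.ModEq.add_left_cancel' _, Nat.ModEq.add_left _⟩

def cycleShift (c : ℕ → ℕ) (x : Σ d : ℕ, Fin (c d) × Fin d) :
    Σ d : ℕ, Fin (c d) × Fin d :=
  ⟨x.1, x.2.1, finRotate x.1 x.2.2⟩

theorem cycleShift_iterate (c : ℕ → ℕ) (n : ℕ) (x : Σ d : ℕ, Fin (c d) × Fin d) :
    (cycleShift c)^[n] x = ⟨x.1, x.2.1, (finRotate x.1)^[n] x.2.2⟩ := by
  induction n with
  | zero => rfl
  | succ n ih => rw [Function.iterate_succ_apply', ih, Function.iterate_succ_apply']; rfl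

theorem setOf_cycleShift_iterate_eq_self (c : ℕ → ℕ) {n : ℕ} (hn : n ≠ 0) :
    {x | (cycleShift c)^[n] x = x} =
      ↑(n.divisors.sigma fun d => (Finset.univ : Finset (Fin (c d) × Fin d))) := by
  ext ⟨d, i, j⟩
  simp [cycleShift_iterate, finRotate_iterate_apply_eq_self_iff, hn]

theorem isRealizable_of_sum_divisors_mul_eq {a : ℕ → ℕ} (c : ℕ → ℕ)
    (h : ∀ n, 1 ≤ n → ∑ d ∈ n.divisors, c d * d = a n) : IsRealizable a := by
  refine ⟨_, cycleShift c, fun n hn => ?_⟩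
  rw [setOf_cycleShift_iterate_eq_self c (by omega)]
  refine ⟨Finset.finite_toSet _, ?_⟩
  rw [Set.ncard_coe_finset, Finset.card_sigma, ← h n hn]
  simp [mul_comm]

theorem isRealizable_of_dvd_doldSum {a : ℕ → ℕ}
    (h : ∀ n : ℕ, 1 ≤ n → (n : ℤ) ∣ doldSum a n ∧ 0 ≤ doldSum a n) :
    IsRealizable a := by
  refine isRealizable_of_sum_divisors_mul_eq (fun d => (doldSum a d).toNat / d) fun n hn => ?_
  have hterm (d : ℕ) (hd : d ∈ n.divisors) :
      (((doldSum a d).toNat / d * d : ℕ) : ℤ) = doldSum a d := by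
    obtain ⟨hdvd, hnonneg⟩ := h d (Nat.pos_of_mem_divisors hd)
    rw [← Int.toNat_of_nonneg hnonneg, Int.natCast_dvd_natCast] at hdvd
    rw [Nat.div_mul_cancel hdvd, Int.toNat_of_nonneg hnonneg]
  exact_mod_cast (Finset.sum_congr rfl hterm).trans (sum_divisors_doldSum a hn)

theorem five_fib_squares_realizable :
    IsRealizable (fun n => 5 * Nat.fib (n ^ 2)) ∧
    ∀ n : ℕ, 1 ≤ n →
      (n : ℤ) ∣ doldSum (fun m => 5 * Nat.fib (m ^ 2)) n ∧
      0 ≤ doldSum (fun m => 5 * Nat.fib (m ^ 2)) n := by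
  have hdold (n : ℕ) (_ : 1 ≤ n) : (n : ℤ) ∣ doldSum (fun m => 5 * Nat.fib (m ^ 2)) n ∧
      0 ≤ doldSum (fun m => 5 * Nat.fib (m ^ 2)) n :=
    ⟨natCast_dvd_doldSum (fun p k m hp _ => prime_pow_dvd_five_mul_fib_sq_sub hp k m) n,
      doldSum_nonneg (fun _ _ h => Nat.mul_le_mul_left 5 (Nat.fib_mono (Nat.pow_le_pow_left h 2)))
        (by rw [mul_left_comm]; exact Nat.mul_le_mul_left 5 (mul_fib_sq_div_two_le n))⟩
  exact ⟨isRealizable_of_dvd_doldSum hdold, hdold⟩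
end

section
/- For every k ≥ 3, the sequence (S(n+k-1, k))_{n≥1} of Stirling numbers of the second kind is not realizable, but the sequence ((k-1)!·S(n+k-1, k))_{n≥1} is realizable. -/
/-- Stirling numbers of the second kind: `stirling2 n k` is the number of
partitions of an `n`-element set into `k` non-empty blocks. -/
def stirling2 : ℕ → ℕ → ℕ
  | 0, 0 => 1
  | 0, _ + 1 => 0
  | _ + 1, 0 => 0
  | n + 1, k + 1 => (k + 1) * stirling2 n (k + 1) + stirling2 n k

/-!
A sequence is realizable iff it satisfies the Dold conditions `n ∣ ∑_{d ∣ n} μ(n/d) a_d ≥ 0`: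
for a map `T`, the Möbius transform of the fixed-point counts of `T^[n]` counts the points of
minimal period `n`, and these fall into orbits of length `n`; conversely, Dold sums `n * c n`
are realized by `c n` disjoint cycles of length `n` for every `n`.

Bertrand's postulate gives a prime `p` with `p < k < 2p`. The congruences
`S(n + p, k) ≡ S(n + 1, k) + S(n, k - p) (mod p)` give `S(p + k - 1, k) ≡ 2`, so the `p`-th Dold
sum `S(p + k - 1, k) - S(k, k)` of the first sequence is `1` mod `p`.

For the second sequence, `(k - 1)! S(n + k - 1, k) = ∑_j (-1)^(k-1+j) C(k-1, j) (j+1)^(k-2) (j+1)^n`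
is an integer combination of sequences `b^n`, whose Dold sums are divisible by `n` because the
full shift on `b` symbols realizes them. Its Dold sums are nonnegative because the sequence at
least doubles at every step, so each term dominates the sum of all earlier ones.
-/

open Finset Function ArithmeticFunction
open scoped Nat ArithmeticFunction.Moebius

theorem Cycle.mem_toFinset {α : Type*} [DecidableEq α] {s : Cycle α} {a : α} :
    a ∈ s.toFinset ↔ a ∈ s := by
  induction s using Quotient.inductionOn'
  simp

namespace Function

variable {X : Type*} (T : X → X)

theorem card_toFinset_periodicOrbit [DecidableEq X] (x : X) :
    (periodicOrbit T x).toFinset.card = minimalPeriod T x := by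
  have hnodup := nodup_periodicOrbit (f := T) (x := x)
  rw [periodicOrbit_def, Cycle.nodup_coe_iff] at hnodup
  rw [periodicOrbit_def, Cycle.coe_toFinset, List.toFinset_card_of_nodup hnodup, List.length_map,
    List.length_range]

theorem dvd_ncard_setOf_minimalPeriod_eq {n : ℕ} (hn : 0 < n) :
    n ∣ {x | minimalPeriod T x = n}.ncard := by
  classical
  by_cases hfin : {x | minimalPeriod T x = n}.Finite
  swap
  · rw [Set.Infinite.ncard hfin]
    exact dvd_zero n
  rw [Set.ncard_eq_toFinset_card _ hfin,
    card_eq_sum_card_image (fun x => (periodicOrbit T x).toFinset)]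
  refine dvd_sum fun O hO => ?_
  obtain ⟨x, hx, rfl⟩ := mem_image.1 hO
  rw [Set.Finite.mem_toFinset, Set.mem_ofPred_eq] at hx
  have hxper : x ∈ periodicPts T := minimalPeriod_pos_iff_mem_periodicPts.1 (hx ▸ hn)
  have hfibre : {y ∈ hfin.toFinset | (periodicOrbit T y).toFinset = (periodicOrbit T x).toFinset} =
      (periodicOrbit T x).toFinset := by
    ext y
    simp only [mem_filter, Set.Finite.mem_toFinset, Set.mem_ofPred_eq]
    constructor
    · rintro ⟨hy, hyx⟩
      have hyper : y ∈ periodicPts T := minimalPeriod_pos_iff_mem_periodicPts.1 (hy ▸ hn)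
      rw [← hyx, Cycle.mem_toFinset]
      exact self_mem_periodicOrbit hyper
    · intro hy
      obtain ⟨i, rfl⟩ := (mem_periodicOrbit_iff hxper).1 (Cycle.mem_toFinset.1 hy)
      rw [minimalPeriod_apply_iterate hxper, periodicOrbit_apply_iterate_eq hxper]
      exact ⟨hx, rfl⟩
  rw [hfibre, card_toFinset_periodicOrbit, hx]

theorem ncard_setOf_iterate_eq_self_eq_sum_divisors {n : ℕ} (hn : 0 < n)
    (hfin : {x | T^[n] x = x}.Finite) :
    {x | T^[n] x = x}.ncard = ∑ d ∈ n.divisors, {x | minimalPeriod T x = d}.ncard := by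
  classical
  rw [Set.ncard_eq_toFinset_card _ hfin, card_eq_sum_card_fiberwise (f := minimalPeriod T)
    (t := n.divisors) fun x hx => ?_]
  · refine sum_congr rfl fun d hd => ?_
    rw [← Set.ncard_coe_finset]
    congr
    ext x
    simp only [coe_filter, Set.Finite.mem_toFinset, Set.mem_ofPred_eq, and_iff_right_iff_imp]
    rintro rfl
    exact isPeriodicPt_iff_minimalPeriod_dvd.2 (Nat.dvd_of_mem_divisors hd)
  · rw [Set.Finite.coe_toFinset] at hx
    exact Nat.mem_divisors.2 ⟨IsPeriodicPt.minimalPeriod_dvd hx, hn.ne'⟩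

end Function

theorem sum_divisors_eq_iff_doldSum_eq {a : ℕ → ℕ} {b : ℕ → ℤ} :
    (∀ n > 0, ∑ d ∈ n.divisors, b d = a n) ↔ ∀ n > 0, doldSum a n = b n := by
  rw [sum_eq_iff_sum_mul_moebius_eq]
  simp only [Int.cast_id, Nat.sum_divisorsAntidiagonal' fun x y => μ x * (a y : ℤ), doldSum]

theorem doldSum_prime {p : ℕ} (hp : p.Prime) (a : ℕ → ℕ) : doldSum a p = a p - a 1 := by
  rw [doldSum, hp.divisors, sum_pair hp.one_lt.ne, Nat.div_one, Nat.div_self hp.pos,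
    moebius_apply_one, moebius_apply_prime hp]
  ring

theorem IsRealizable.of_eq_sum_divisors {a : ℕ → ℕ} (c : ℕ → ℕ)
    (h : ∀ n > 0, a n = ∑ d ∈ n.divisors, c d * d) : IsRealizable a := by
  -- `c d` disjoint cycles of length `d` for every `d`
  let T : (Σ d : ℕ, Fin (c d) × ZMod d) → (Σ d : ℕ, Fin (c d) × ZMod d) :=
    fun x => ⟨x.1, x.2.1, x.2.2 + 1⟩
  have hT (n : ℕ) (x) : T^[n] x = ⟨x.1, x.2.1, x.2.2 + n⟩ := by
    induction n with
    | zero => simp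
    | succ n ih => rw [iterate_succ_apply', ih]; simp [T, add_assoc]
  refine ⟨_, T, fun n (hn : 0 < n) => ?_⟩
  have hfix : {x | T^[n] x = x} = {x | x.1 ∈ n.divisors} := by
    ext ⟨d, i, z⟩
    simp [hT, ZMod.natCast_eq_zero_iff, hn.ne']
  have (d : n.divisors) : NeZero (d : ℕ) := ⟨(Nat.pos_of_mem_divisors d.2).ne'⟩
  let e : {x | T^[n] x = x} ≃ Σ d : n.divisors, Fin (c d) × ZMod d :=
    (Equiv.setCongr hfix).trans (Equiv.subtypeSigmaEquiv _ (· ∈ n.divisors))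
  refine ⟨Set.finite_coe_iff.1 (Finite.of_equiv _ e.symm), ?_⟩
  rw [← Nat.card_coe_set_eq, Nat.card_congr e, Nat.card_sigma, h n hn,
    ← sum_coe_sort n.divisors]
  simp

theorem isRealizable_iff_doldSum {a : ℕ → ℕ} :
    IsRealizable a ↔ ∀ n : ℕ, 0 < n → (n : ℤ) ∣ doldSum a n ∧ 0 ≤ doldSum a n := by
  constructor
  · rintro ⟨X, T, hT⟩
    have hdold := (sum_divisors_eq_iff_doldSum_eq (a := a)
      (b := fun d => ({x | minimalPeriod T x = d}.ncard : ℤ))).1 fun n hn => by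
        rw [← (hT n hn).2, ncard_setOf_iterate_eq_self_eq_sum_divisors T hn (hT n hn).1]
        push_cast
        rfl
    intro n hn
    rw [hdold n hn]
    exact ⟨Int.natCast_dvd_natCast.2 (dvd_ncard_setOf_minimalPeriod_eq T hn), by positivity⟩
  · intro h
    refine IsRealizable.of_eq_sum_divisors (fun n => (doldSum a n / n).toNat) fun n hn => ?_
    have hsum := (sum_divisors_eq_iff_doldSum_eq (b := doldSum a)).2 (fun _ _ => rfl) n hn
    zify
    rw [← hsum]
    refine sum_congr rfl fun d hd => ?_
    obtain ⟨hdvd, hnonneg⟩ := h d (Nat.pos_of_mem_divisors hd)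
    rw [Int.toNat_of_nonneg (Int.ediv_nonneg hnonneg d.cast_nonneg), Int.ediv_mul_cancel hdvd]

theorem isRealizable_pow (b : ℕ) : IsRealizable (b ^ ·) := by
  -- the full shift on `b` symbols
  let T : (ℕ → Fin b) → (ℕ → Fin b) := fun f m => f (m + 1)
  have hT (n : ℕ) (f : ℕ → Fin b) : T^[n] f = fun m => f (m + n) := by
    induction n generalizing f with
    | zero => rfl
    | succ n ih => rw [iterate_succ_apply, ih]; rfl
  refine ⟨_, T, fun n hn => ?_⟩
  let e : {f | T^[n] f = f} ≃ (Fin n → Fin b) :=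
    { toFun := fun f i => f.1 i
      invFun := fun g => ⟨fun m => g ⟨m % n, Nat.mod_lt m hn⟩, by
        rw [Set.mem_ofPred_eq, hT]
        ext m
        simp⟩
      left_inv := fun f => by
        have hper : Periodic f.1 n := fun m => congrFun ((hT n f.1).symm.trans f.2) m
        ext m
        exact congrArg _ (hper.map_mod_nat m)
      right_inv := fun g => by
        ext i
        simp [Nat.mod_eq_of_lt i.2] }
  refine ⟨Set.finite_coe_iff.1 (Finite.of_equiv _ e.symm), ?_⟩
  rw [← Nat.card_coe_set_eq, Nat.card_congr e]
  simp

theorem dvd_sum_moebius_mul_pow (b : ℕ) {n : ℕ} (hn : 0 < n) :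
    (n : ℤ) ∣ ∑ d ∈ n.divisors, μ (n / d) * (b : ℤ) ^ d := by
  simpa [doldSum] using (isRealizable_iff_doldSum.1 (isRealizable_pow b) n hn).1

theorem dvd_doldSum_of_eq_sum_pow {a : ℕ → ℕ} {ι : Type*} (s : Finset ι) (w : ι → ℤ) (b : ι → ℕ)
    (h : ∀ m, (a m : ℤ) = ∑ i ∈ s, w i * (b i : ℤ) ^ m) {n : ℕ} (hn : 0 < n) :
    (n : ℤ) ∣ doldSum a n := by
  simp only [doldSum, h, mul_sum]
  rw [sum_comm]
  refine dvd_sum fun i _ => ?_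
  simp only [mul_left_comm _ (w i), ← mul_sum]
  exact dvd_mul_of_dvd_right (dvd_sum_moebius_mul_pow (b i) hn) _

theorem sum_range_le_of_two_mul_le {a : ℕ → ℕ} (h : ∀ m, 2 * a m ≤ a (m + 1)) (n : ℕ) :
    ∑ d ∈ range n, a d ≤ a n := by
  induction n with
  | zero => simp
  | succ n ih => rw [sum_range_succ]; linarith [h n]

theorem doldSum_nonneg_of_two_mul_le {a : ℕ → ℕ} (h : ∀ m, 2 * a m ≤ a (m + 1)) (n : ℕ) :
    0 ≤ doldSum a n := by
  rcases n.eq_zero_or_pos with rfl | hn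
  · simp [doldSum]
  have hproper : ∑ d ∈ n.properDivisors, a d ≤ a n :=
    (sum_le_sum_of_subset fun d hd => mem_range.2 (Nat.mem_properDivisors.1 hd).2).trans
      (sum_range_le_of_two_mul_le h n)
  have hmoebius : ∑ d ∈ n.properDivisors, -(a d : ℤ) ≤
      ∑ d ∈ n.properDivisors, μ (n / d) * (a d : ℤ) := by
    refine sum_le_sum fun d _ => ?_
    have := (abs_le.1 (abs_moebius_le_one (n := n / d))).1
    nlinarith [(a d).cast_nonneg (α := ℤ)]
  rw [sum_neg_distrib] at hmoebius
  have hproper' : ∑ d ∈ n.properDivisors, (a d : ℤ) ≤ a n := by exact_mod_cast hproper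
  rw [doldSum, ← Nat.cons_self_properDivisors hn.ne', sum_cons, Nat.div_self hn, moebius_apply_one,
    one_mul]
  linarith

theorem stirling2_eq_stirlingSecond : stirling2 = Nat.stirlingSecond := by
  funext n k
  induction n generalizing k with
  | zero => cases k <;> rfl
  | succ n ih => cases k <;> simp [stirling2, Nat.stirlingSecond, ih]

namespace Nat

theorem factorial_mul_stirlingSecond_succ_succ (n k : ℕ) :
    (k ! * stirlingSecond (n + 1) (k + 1) : ℤ) =
      ∑ j ∈ range (k + 1), (-1) ^ (k + j) * k.choose j * ((j : ℤ) + 1) ^ n := by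
  induction n generalizing k with
  | zero =>
    simp only [pow_zero, mul_one, pow_add, mul_assoc, ← mul_sum, Int.alternating_sum_range_choose]
    rcases k with _ | c
    · simp [stirlingSecond_self]
    · simp [stirlingSecond_eq_zero_of_lt]
  | succ n ih =>
    rcases k with _ | c
    · simp [stirlingSecond_one_right]
    · -- `(j + 1) C(c+1, j) = (c + 2) C(c+1, j) - (c + 1) C(c, j)`
      have key : ∀ j ∈ range (c + 2),
          (-1 : ℤ) ^ (c + 1 + j) * (c + 1).choose j * ((j : ℤ) + 1) ^ (n + 1) =
          (c + 2) * ((-1) ^ (c + 1 + j) * (c + 1).choose j * ((j : ℤ) + 1) ^ n) +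
            (c + 1) * ((-1) ^ (c + j) * c.choose j * ((j : ℤ) + 1) ^ n) := by
        intro j hj
        have hjc : j ≤ c + 1 := Nat.lt_succ_iff.mp (mem_range.mp hj)
        have habs : (c.choose j * (c + 1) : ℤ) = (c + 1).choose j * (c + 1 - j) := by
          exact_mod_cast Nat.choose_mul_succ_eq c j
        rw [pow_succ, pow_add _ c j, pow_add _ (c + 1) j]
        linear_combination (-(-1) ^ c * (-1) ^ j * ((j : ℤ) + 1) ^ n) * habs
      have hlast : ∑ j ∈ range (c + 2), (-1 : ℤ) ^ (c + j) * c.choose j * ((j : ℤ) + 1) ^ n =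
          ∑ j ∈ range (c + 1), (-1 : ℤ) ^ (c + j) * c.choose j * ((j : ℤ) + 1) ^ n := by
        rw [sum_range_succ, Nat.choose_succ_self]; simp
      rw [sum_congr rfl key, sum_add_distrib, ← mul_sum, ← mul_sum, hlast, ← ih, ← ih,
        stirlingSecond_succ_succ, factorial_succ]
      push_cast
      ring

theorem two_mul_stirlingSecond_le {k : ℕ} (hk : 2 ≤ k) (n : ℕ) :
    2 * stirlingSecond n k ≤ stirlingSecond (n + 1) k := by
  rw [stirlingSecond_succ_left n k (by omega)]
  nlinarith

section ModPrime

variable {p : ℕ} [hp : Fact p.Prime]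

theorem stirlingSecond_prime_of_lt {k : ℕ} (hk : k < p) :
    (stirlingSecond p k : ZMod p) = stirlingSecond 1 k := by
  obtain ⟨q, rfl⟩ : ∃ q, p = q + 1 := ⟨p - 1, (Nat.sub_add_cancel hp.out.one_le).symm⟩
  rcases k with _ | c
  · simp
  have hfac : (c ! : ZMod (q + 1)) ≠ 0 := by
    rw [Ne, ZMod.natCast_eq_zero_iff, hp.out.dvd_factorial]
    omega
  refine mul_left_cancel₀ hfac ?_
  have hformula (m : ℕ) := congrArg (Int.cast : ℤ → ZMod (q + 1))
    (factorial_mul_stirlingSecond_succ_succ m c)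
  push_cast at hformula
  have hformula_one := hformula 0
  rw [zero_add] at hformula_one
  rw [hformula, hformula_one]
  refine sum_congr rfl fun j hj => ?_
  -- Fermat's little theorem applies to `j + 1` as `0 < j + 1 ≤ k < p`
  have hj : ((j + 1 : ℕ) : ZMod (q + 1)) ≠ 0 := by
    rw [Ne, ZMod.natCast_eq_zero_iff]
    exact fun h => absurd (Nat.le_of_dvd (by omega) h) (by simp at hj; omega)
  push_cast at hj
  have hfermat := ZMod.pow_card_sub_one_eq_one hj
  rw [Nat.add_sub_cancel] at hfermat
  rw [hfermat, pow_zero]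

theorem stirlingSecond_add_prime_of_lt {k : ℕ} (hk : k < p) (n : ℕ) :
    (stirlingSecond (n + p) k : ZMod p) = stirlingSecond (n + 1) k := by
  induction n generalizing k with
  | zero => rw [zero_add, stirlingSecond_prime_of_lt hk]
  | succ n ih =>
    rw [Nat.add_right_comm]
    rcases k with _ | c
    · simp
    · rw [stirlingSecond_succ_succ, stirlingSecond_succ_succ (n + 1)]
      push_cast
      rw [ih hk, ih (by omega)]

theorem stirlingSecond_add_prime_add_prime (n k : ℕ) :
    (stirlingSecond (n + p) (k + p) : ZMod p) =
      stirlingSecond (n + 1) (k + p) + stirlingSecond n k := by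
  have hp1 := hp.out.one_lt
  induction n generalizing k with
  | zero =>
    rcases k with _ | c
    · simp [stirlingSecond_self, stirlingSecond_eq_zero_of_lt hp1]
    · simp [stirlingSecond_eq_zero_of_lt (show p < c + 1 + p by omega),
        stirlingSecond_eq_zero_of_lt (show 1 < c + 1 + p by omega)]
  | succ n ih =>
    rw [Nat.add_right_comm]
    rcases k with _ | c
    · rw [zero_add, stirlingSecond_succ_left _ _ hp.out.ne_zero,
        stirlingSecond_succ_left _ _ hp.out.ne_zero]
      push_cast
      rw [stirlingSecond_add_prime_of_lt (k := p - 1) (by omega), ZMod.natCast_self]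
      simp
    · rw [Nat.add_right_comm c 1 p, stirlingSecond_succ_succ (n + p) (c + p),
        stirlingSecond_succ_succ (n + 1) (c + p), stirlingSecond_succ_succ n c]
      push_cast
      rw [← Nat.add_right_comm c 1 p, ih (c + 1), ih c, ZMod.natCast_self]
      ring

theorem stirlingSecond_prime_add_sub_one {k : ℕ} (hpk : p < k) (hkp : k < 2 * p) :
    (stirlingSecond (p + k - 1) k : ZMod p) = 2 := by
  obtain ⟨r, rfl⟩ : ∃ r, k = r + 1 + p := ⟨k - p - 1, by omega⟩
  have hr : r + 1 < p := by omega
  rw [show p + (r + 1 + p) - 1 = r + p + p by omega, stirlingSecond_add_prime_add_prime,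
    stirlingSecond_add_prime_of_lt hr, Nat.add_right_comm r p 1, stirlingSecond_self,
    stirlingSecond_self]
  norm_num

end ModPrime

end Nat

theorem Nat.exists_prime_lt_and_lt_two_mul {k : ℕ} (hk : 3 ≤ k) :
    ∃ p, p.Prime ∧ p < k ∧ k < 2 * p := by
  obtain ⟨p, hp, hlt, hle⟩ := Nat.exists_prime_lt_and_le_two_mul (k / 2) (by omega)
  refine ⟨p, hp, lt_of_le_of_ne (by omega) ?_, by omega⟩
  rintro rfl
  have := hp.even_iff.1 (Nat.even_iff.2 (by omega))
  omega

theorem not_isRealizable_stirlingSecond {k : ℕ} (hk : 3 ≤ k) :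
    ¬ IsRealizable (fun n => Nat.stirlingSecond (n + k - 1) k) := by
  intro hreal
  obtain ⟨p, hp, hpk, hkp⟩ := Nat.exists_prime_lt_and_lt_two_mul hk
  have : Fact p.Prime := ⟨hp⟩
  have hdvd := (isRealizable_iff_doldSum.1 hreal p hp.pos).1
  rw [doldSum_prime hp, ← ZMod.intCast_zmod_eq_zero_iff_dvd] at hdvd
  push_cast at hdvd
  rw [Nat.stirlingSecond_prime_add_sub_one hpk hkp, Nat.add_sub_cancel_left,
    Nat.stirlingSecond_self] at hdvd
  norm_num at hdvd

theorem isRealizable_factorial_mul_stirlingSecond {k : ℕ} (hk : 2 ≤ k) :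
    IsRealizable (fun n => (k - 1)! * Nat.stirlingSecond (n + k - 1) k) := by
  obtain ⟨k, rfl⟩ : ∃ j, k = j + 2 := ⟨k - 2, by omega⟩
  refine isRealizable_iff_doldSum.2 fun n hn => ⟨?_, doldSum_nonneg_of_two_mul_le (fun m => ?_) n⟩
  · refine dvd_doldSum_of_eq_sum_pow (range (k + 2))
      (fun j => (-1) ^ (k + 1 + j) * (k + 1).choose j * ((j : ℤ) + 1) ^ k) (· + 1) (fun m => ?_) hn
    rw [show m + (k + 2) - 1 = m + k + 1 by omega, show k + 2 - 1 = k + 1 from rfl]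
    push_cast
    rw [Nat.factorial_mul_stirlingSecond_succ_succ]
    refine sum_congr rfl fun j _ => ?_
    ring
  · rw [show m + 1 + (k + 2) - 1 = m + (k + 2) - 1 + 1 by omega, mul_left_comm]
    exact Nat.mul_le_mul_left _ (Nat.two_mul_stirlingSecond_le (by omega) _)

theorem stirling2_large_k (k : ℕ) (hk : 3 ≤ k) :
    ¬ IsRealizable (fun n => stirling2 (n + k - 1) k) ∧
    IsRealizable (fun n => Nat.factorial (k - 1) * stirling2 (n + k - 1) k) := by
  rw [stirling2_eq_stirlingSecond]
  exact ⟨not_isRealizable_stirlingSecond hk, isRealizable_factorial_mul_stirlingSecond (by omega)⟩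
end
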